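/- arXiv:2509.08325 — 5 statements merged into one kernel-verified Lean document; each statement's English description precedes it below -/
import Mathlib

section
/- Let G and G' be infinite connected locally finite graphs with graph metrics d, d' and let c > 0. If u is a point of the horocompactification of G (so d_u is either a shifted distance function d_x or a horofunction) and u' likewise for G', then the function d_{(u,u')}((y,y')) := d_u(y) + d_{u'}(y')/c is a point of the horocompactification of the product G × G' equipped with the metric ρ_c((x,x'),(y,y')) = d(x,y)+d'(x',y')/c; moreover every point of the horocompactification of (G × G', ρ_c) arises this way. -/
open Filter

/-- A function `h` is a point of the horocompactification (w.r.t. a distance function `d`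
and base point `o`) if it is a pointwise limit of shifted distance functions
`d(xₙ, ·) - d(xₙ, o)`.  (Constant sequences recover the shifted distance functions
themselves, so this is exactly the closure of these functions under pointwise
convergence.) -/
def IsHoroCptPoint {V : Type*} (d : V → V → ℝ) (o : V) (h : V → ℝ) : Prop :=
  ∃ x : ℕ → V, ∀ y : V, Tendsto (fun n : ℕ => d (x n) y - d (x n) o) atTop (nhds (h y))

/-- the horocompactification of the `ρ_c`-product of two infinite connected
locally finite graphs is exactly the product of the horocompactifications. -/
theorem horocompactification_product {V V' : Type*} [Infinite V] [Infinite V']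
    (G : SimpleGraph V) (G' : SimpleGraph V')
    (hconn : G.Connected) (hconn' : G'.Connected)
    (hlf : G.LocallyFinite) (hlf' : G'.LocallyFinite)
    (o : V) (o' : V') (c : ℝ) (hc : 0 < c) :
    let dG : V → V → ℝ := fun a b => (G.dist a b : ℝ)
    let dG' : V' → V' → ℝ := fun a b => (G'.dist a b : ℝ)
    let ρc : V × V' → V × V' → ℝ := fun z w => dG z.1 w.1 + dG' z.2 w.2 / c
    (∀ (du : V → ℝ) (du' : V' → ℝ),
        IsHoroCptPoint dG o du → IsHoroCptPoint dG' o' du' →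
        IsHoroCptPoint ρc (o, o') (fun w => du w.1 + du' w.2 / c)) ∧
    (∀ h : V × V' → ℝ, IsHoroCptPoint ρc (o, o') h →
        ∃ (du : V → ℝ) (du' : V' → ℝ),
          IsHoroCptPoint dG o du ∧ IsHoroCptPoint dG' o' du' ∧
          h = fun w => du w.1 + du' w.2 / c) := by
  intro dG dG' ρc
  have hc0 : c ≠ 0 := ne_of_gt hc
  constructor
  · rintro du du' ⟨x, hx⟩ ⟨x', hx'⟩
    refine ⟨fun n => (x n, x' n), fun w => ?_⟩
    have := (hx w.1).add ((hx' w.2).div_const c)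
    convert this using 2 with n
    show ρc (x n, x' n) w - ρc (x n, x' n) (o, o') = _
    simp only [ρc, dG, dG']
    ring
  · rintro h ⟨z, hz⟩
    have key1 : ∀ y : V, Tendsto (fun n : ℕ => dG ((z n).1) y - dG ((z n).1) o) atTop
        (nhds (h (y, o'))) := by
      intro y
      have := hz (y, o')
      convert this using 2 with n
      show _ = ρc (z n) (y, o') - ρc (z n) (o, o')
      simp only [ρc, dG, dG']
      ring
    have key2 : ∀ y' : V', Tendsto (fun n : ℕ => dG' ((z n).2) y' - dG' ((z n).2) o') atTop
        (nhds (c * h (o, y'))) := by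
      intro y'
      have := (hz (o, y')).const_mul c
      convert this using 2 with n
      show _ = c * (ρc (z n) (o, y') - ρc (z n) (o, o'))
      simp only [ρc, dG, dG']
      field_simp
      ring
    refine ⟨fun y => h (y, o'), fun y' => c * h (o, y'), ⟨fun n => (z n).1, key1⟩,
      ⟨fun n => (z n).2, key2⟩, ?_⟩
    funext w
    have h1 : Tendsto (fun n : ℕ => ρc (z n) w - ρc (z n) (o, o')) atTop
        (nhds (h (w.1, o') + c * h (o, w.2) / c)) := by
      have := (key1 w.1).add ((key2 w.2).div_const c)
      convert this using 2 with n
      simp only [ρc, dG, dG']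
      field_simp
      ring
    exact tendsto_nhds_unique (hz w) h1
end

section
/- Let G, G' be nonamenable finitely generated groups with growth rates a > 1 and a' > 1, and let c = log a / log a'. Then there exists an increasing function f : ℕ → ℕ with f(0) = 0 and an increasing sequence (r_j) of natural numbers such that, setting r'_j := f(r_j), the ratios v'_{r'_j}/v_{r_j} are bounded above and bounded away from 0 uniformly in j, and f is almost linear of slope c: for every m there exists N such that for all n ≥ N, |f(n+m) − f(n) − c·m| ≤ 1. -/
set_option maxHeartbeats 2000000
open Filter Pointwise



def wordBall {G : Type*} [Group G] (S : Set G) (n : ℕ) : Set G :=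
  {g | ∃ l : List G, l.length ≤ n ∧ (∀ x ∈ l, x ∈ S) ∧ l.prod = g}

noncomputable def ballVol {G : Type*} [Group G] (S : Set G) (n : ℕ) : ℕ :=
  (wordBall S n).ncard

section BallBasics
variable {G : Type*} [Group G] (S : Finset G)

lemma one_mem_wordBall (n : ℕ) : (1 : G) ∈ wordBall (S : Set G) n :=
  ⟨[], by simp⟩

lemma wordBall_mono {m n : ℕ} (h : m ≤ n) :
    wordBall (S : Set G) m ⊆ wordBall (S : Set G) n := by
  rintro g ⟨l, hl, hmem, hprod⟩
  exact ⟨l, hl.trans h, hmem, hprod⟩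

lemma wordBall_zero : wordBall (S : Set G) 0 = {1} := by
  ext g
  constructor
  · rintro ⟨l, hl, -, hprod⟩
    simp only [Nat.le_zero, List.length_eq_zero_iff] at hl
    subst hl; simp at hprod; simp [hprod.symm]
  · rintro rfl; exact one_mem_wordBall S 0

lemma wordBall_succ_subset (n : ℕ) :
    wordBall (S : Set G) (n + 1) ⊆ wordBall (S : Set G) 1 * wordBall (S : Set G) n := by
  rintro g ⟨l, hl, hmem, hprod⟩
  refine ⟨(l.take 1).prod, ⟨l.take 1, ?_, fun x hx => hmem x (List.mem_of_mem_take hx), rfl⟩,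
    (l.drop 1).prod, ⟨l.drop 1, ?_, fun x hx => hmem x (List.mem_of_mem_drop hx), rfl⟩, ?_⟩
  · simpa using (List.length_take 1 l) ▸ min_le_left 1 l.length
  · simp only [List.length_drop]; omega
  · show (l.take 1).prod * (l.drop 1).prod = g
    rw [← List.prod_append, List.take_append_drop]; exact hprod

lemma wordBall_one_subset : wordBall (S : Set G) 1 ⊆ insert 1 (S : Set G) := by
  rintro g ⟨l, hl, hmem, hprod⟩
  match l, hl with
  | [], _ => simp at hprod; simp [hprod.symm]
  | [x], _ =>
    simp at hprod
    exact Set.mem_insert_iff.2 (Or.inr (hprod ▸ hmem x (by simp)))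

lemma wordBall_finite (n : ℕ) : (wordBall (S : Set G) n).Finite := by
  induction n with
  | zero => rw [wordBall_zero]; exact Set.finite_singleton 1
  | succ n ih =>
    refine Set.Finite.subset ?_ (wordBall_succ_subset S n)
    exact Set.Finite.mul (Set.Finite.subset (by
      exact (Set.finite_coe_iff.mp inferInstance : (↑S : Set G).Finite).insert 1)
      (wordBall_one_subset S)) ih

lemma one_le_ballVol (n : ℕ) : 1 ≤ ballVol (S : Set G) n :=
  (Set.ncard_pos (wordBall_finite S n)).2 ⟨1, one_mem_wordBall S n⟩

lemma ballVol_mono : Monotone (fun n => ballVol (S : Set G) n) := by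
  intro m n h
  exact Set.ncard_le_ncard (wordBall_mono S h) (wordBall_finite S n)

lemma ballVol_succ_le (n : ℕ) :
    ballVol (S : Set G) (n + 1) ≤ ballVol (S : Set G) 1 * ballVol (S : Set G) n := by
  classical
  have h1 := wordBall_finite S 1
  have hn := wordBall_finite S n
  calc ballVol (S : Set G) (n+1)
      ≤ (wordBall (S : Set G) 1 * wordBall (S : Set G) n).ncard :=
        Set.ncard_le_ncard (wordBall_succ_subset S n) (h1.mul hn)
    _ ≤ _ := by
        rw [show wordBall (S : Set G) 1 * wordBall (S : Set G) n
            = ↑(h1.toFinset * hn.toFinset) by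
          rw [Finset.coe_mul, Set.Finite.coe_toFinset, Set.Finite.coe_toFinset]]
        rw [Set.ncard_coe_finset]
        refine le_trans Finset.card_mul_le ?_
        unfold ballVol
        rw [← Set.ncard_coe_finset h1.toFinset, ← Set.ncard_coe_finset hn.toFinset,
          Set.Finite.coe_toFinset, Set.Finite.coe_toFinset]

end BallBasics



-- extract linear bounds from Q n / n → 0
lemma linbound_of_tendsto_zero (Q : ℕ → ℝ) (hQo : Tendsto (fun n => Q n / n) atTop (nhds 0))
    {ε : ℝ} (hε : 0 < ε) : ∃ N : ℕ, 1 ≤ N ∧ ∀ n, N ≤ n → Q n ≤ ε * n := by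
  have h := (hQo.eventually (eventually_abs_sub_lt 0 hε)).and (eventually_ge_atTop 1)
  rw [eventually_atTop] at h
  obtain ⟨N, hN⟩ := h
  refine ⟨max N 1, le_max_right _ _, fun n hn => ?_⟩
  have hn1 : 1 ≤ n := le_trans (le_max_right _ _) hn
  obtain ⟨h1, -⟩ := hN n (le_trans (le_max_left _ _) hn)
  have hnpos : (0:ℝ) < n := by exact_mod_cast hn1
  have : Q n / n < ε := lt_of_le_of_lt (le_abs_self _) (by simpa using h1)
  calc Q n = Q n / n * n := by field_simp
    _ ≤ ε * n := by nlinarith [this]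

lemma core_contra (Q : ℕ → ℝ) (hQ1 : ∀ n, 1 ≤ Q n) (hQmono : Monotone Q)
    (hQo : Tendsto (fun n => Q n / n) atTop (nhds 0))
    (c₀ : ℝ) (hc₀ : 0 < c₀)
    (γ : ℕ → ℝ) (hγ : ∀ k, γ k = min c₀ (4 * Q k / (k+1)))
    (A : ℝ) (N : ℕ)
    (hyp : ∀ n, N ≤ n → (∑ k ∈ Finset.Ico N n, γ k) ≤ A + Q n) : False := by
  have hγpos : ∀ k, 0 < γ k := by
    intro k
    rw [hγ]
    refine lt_min hc₀ (div_pos (by nlinarith [hQ1 k]) (by positivity))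
  by_cases hB : ∃ B, ∀ n, Q n ≤ B
  · -- bounded case: sum diverges harmonically
    obtain ⟨B, hBb⟩ := hB
    set c₁ := min c₀ 4 with hc₁
    have hc₁pos : 0 < c₁ := lt_min hc₀ (by norm_num)
    have hγlow : ∀ k : ℕ, c₁ * (1 / ((k:ℝ)+1)) ≤ γ k := by
      intro k
      rw [hγ]
      have hk1 : (0:ℝ) < (k:ℝ)+1 := by positivity
      refine le_min ?_ ?_
      · calc c₁ * (1/((k:ℝ)+1)) ≤ c₁ * 1 := by
              refine mul_le_mul_of_nonneg_left ?_ hc₁pos.le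
              rw [div_le_one hk1]; linarith [Nat.cast_nonneg (α := ℝ) k]
          _ = c₁ := mul_one _
          _ ≤ c₀ := min_le_left _ _
      · rw [mul_one_div]
        gcongr
        nlinarith [hQ1 k, min_le_right c₀ 4]
    set Ssum := fun n => ∑ i ∈ Finset.range n, 1 / ((i:ℝ)+1) with hS
    have hdiv := Real.tendsto_sum_range_one_div_nat_succ_atTop
    have hev := (hdiv.eventually_ge_atTop (Ssum N + (A + B + 1)/c₁)).and (eventually_ge_atTop N)
    obtain ⟨n, hn1, hn2⟩ := hev.exists
    have hsum1 : (∑ k ∈ Finset.Ico N n, γ k) ≥ c₁ * (Ssum n - Ssum N) := by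
      rw [hS]
      simp only
      rw [← Finset.sum_Ico_eq_sub _ hn2, Finset.mul_sum]
      exact Finset.sum_le_sum (fun k _ => hγlow k)
    have h2 := hyp n hn2
    have hQB := hBb n
    have : c₁ * ((A+B+1)/c₁) ≤ c₁ * (Ssum n - Ssum N) := by
      refine mul_le_mul_of_nonneg_left ?_ hc₁pos.le
      linarith [hn1]
    rw [mul_div_cancel₀ _ hc₁pos.ne'] at this
    linarith
  · -- unbounded case
    push_neg at hB
    obtain ⟨N₁', hN₁'1, hN₁'⟩ := linbound_of_tendsto_zero Q hQo (show (0:ℝ) < c₀/2 by positivity)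
    set N₁ := max N N₁' with hN₁def
    have hkey : ∀ m, N₁ ≤ m → 2 * Q m - A ≤ Q (2*m) := by
      intro m hm
      have hmN : N ≤ m := le_trans (le_max_left _ _) hm
      have hm1 : 1 ≤ m := le_trans hN₁'1 (le_trans (le_max_right _ _) hm)
      have hmR : (1:ℝ) ≤ m := by exact_mod_cast hm1
      have hQm : 2 * Q m ≤ c₀ * m := by
        have := hN₁' m (le_trans (le_max_right _ _) hm)
        linarith
      have hsub : Finset.Ico m (2*m) ⊆ Finset.Ico N (2*m) :=
        Finset.Ico_subset_Ico hmN (le_refl _)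
      have h1 : (∑ k ∈ Finset.Ico m (2*m), γ k) ≤ ∑ k ∈ Finset.Ico N (2*m), γ k :=
        Finset.sum_le_sum_of_subset_of_nonneg hsub (fun k _ _ => (hγpos k).le)
      have h2 : ∀ k ∈ Finset.Ico m (2*m), (2 * Q m / m : ℝ) ≤ γ k := by
        intro k hk
        rw [Finset.mem_Ico] at hk
        rw [hγ]
        refine le_min ?_ ?_
        · rw [div_le_iff₀ (by positivity : (0:ℝ) < (m:ℝ))] at *
          linarith [hQm]
        · have hk1 : ((k:ℝ)+1) ≤ 2*m := by
            have : k + 1 ≤ 2*m := hk.2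
            exact_mod_cast this
          have hQk : Q m ≤ Q k := hQmono hk.1
          rw [div_le_div_iff₀ (by positivity) (by positivity)]
          have h4 : 2 * Q m * ((k:ℝ)+1) ≤ 2 * Q m * (2*(m:ℝ)) := by
            refine mul_le_mul_of_nonneg_left hk1 (by nlinarith [hQ1 m])
          calc 2 * Q m * ((k:ℝ)+1) ≤ 2 * Q m * (2*(m:ℝ)) := h4
            _ = 4 * Q m * m := by ring
            _ ≤ 4 * Q k * m := by nlinarith [hQ1 m, hQmono hk.1]
      have hcard : (Finset.Ico m (2*m)).card = m := by
        rw [Nat.card_Ico]; omega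
      have h3 : (m : ℝ) * (2 * Q m / m) ≤ ∑ k ∈ Finset.Ico m (2*m), γ k := by
        calc (m:ℝ) * (2 * Q m / m) = ∑ _k ∈ Finset.Ico m (2*m), (2 * Q m / m : ℝ) := by
              rw [Finset.sum_const, hcard, nsmul_eq_mul]
          _ ≤ _ := Finset.sum_le_sum h2
      have hmpos : (0:ℝ) < m := by linarith
      have hmm : (m:ℝ) * (2 * Q m / m) = 2 * Q m := by field_simp
      rw [hmm] at h3
      have h5 := hyp (2*m) (le_trans hmN (by omega))
      push_cast at h5 ⊢
      linarith [le_trans h3 (le_trans h1 h5)]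
    -- find m₀
    have hunb := hB (A + 1 + Q N₁)
    obtain ⟨n₀, hn₀⟩ := hunb
    set m₀ := max n₀ (max N₁ 1) with hm₀def
    have hm₀N₁ : N₁ ≤ m₀ := le_trans (le_max_left _ _) (le_max_right _ _)
    have hm₀1 : 1 ≤ m₀ := le_trans (le_max_right _ _) (le_max_right _ _)
    have hQm₀ : A + 1 ≤ Q m₀ := by
      have := hQmono (le_max_left n₀ (max N₁ 1))
      nlinarith [hQ1 N₁]
    have hind : ∀ k : ℕ, 2^k * (Q m₀ - A) + A ≤ Q (2^k * m₀) := by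
      intro k
      induction k with
      | zero => simp
      | succ k ih =>
        have h2k : N₁ ≤ 2^k * m₀ := le_trans hm₀N₁ (Nat.le_mul_of_pos_left m₀ (by positivity))
        have := hkey (2^k * m₀) h2k
        have harr : 2 * (2^k * m₀) = 2^(k+1) * m₀ := by ring
        rw [harr] at this
        push_cast at this ih ⊢
        have hp : (2:ℝ)^(k+1) = 2 * 2^k := by ring
        nlinarith [hp]
    obtain ⟨N₂, hN₂1, hN₂⟩ := linbound_of_tendsto_zero Q hQo (show (0:ℝ) < 1/(4*(m₀:ℝ)) by
      have : (0:ℝ) < m₀ := by exact_mod_cast hm₀1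
      positivity)
    obtain ⟨j, hj⟩ := exists_nat_ge (max (N₂ : ℝ) (2 * (0 - A) + 4))
    have hjN₂ : (N₂ : ℝ) ≤ j := le_trans (le_max_left _ _) hj
    have hjA : 2 * (0 - A) + 4 ≤ (j:ℝ) := le_trans (le_max_right _ _) hj
    have hj2 : j < 2^j := Nat.lt_two_pow_self
    have hterm : N₂ ≤ 2^j * m₀ := by
      have : j ≤ 2^j * m₀ := le_trans hj2.le (Nat.le_mul_of_pos_right _ (by positivity))
      have hN₂j : N₂ ≤ j := by exact_mod_cast hjN₂
      omega
    have hup := hN₂ (2^j * m₀) hterm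
    have hlow := hind j
    have hm₀R : (1:ℝ) ≤ (m₀:ℝ) := by exact_mod_cast hm₀1
    have hcast : ((2^j * m₀ : ℕ) : ℝ) = 2^j * (m₀:ℝ) := by push_cast; ring
    rw [hcast] at hup
    have h2j : (1:ℝ) ≤ 2^j := one_le_pow₀ (by norm_num)
    -- Q(2^j m₀) ≥ 2^j (Qm₀ − A) + A ≥ 2^j + A ; and ≤ (1/(4 m₀)) 2^j m₀ = 2^j/4
    have hQge : (2:ℝ)^j + A ≤ Q (2^j * m₀) := by
      have : (2:ℝ)^j * 1 ≤ 2^j * (Q m₀ - A) := by nlinarith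
      nlinarith
    have hQle : Q (2^j * m₀) ≤ (2:ℝ)^j / 4 := by
      calc Q (2^j * m₀) ≤ 1/(4*(m₀:ℝ)) * (2^j * (m₀:ℝ)) := hup
        _ = (2:ℝ)^j / 4 * ((m₀:ℝ)/(m₀:ℝ)) := by ring
        _ = (2:ℝ)^j / 4 := by rw [div_self (by linarith : (m₀:ℝ) ≠ 0), mul_one]
    have hjbig : (2:ℝ)^j ≥ (j:ℝ) := by
      have := hj2.le
      exact_mod_cast Nat.cast_le.mpr this
    nlinarith



noncomputable def chase (h γ : ℕ → ℝ) : ℕ → ℝ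
  | 0 => 0
  | n+1 => chase h γ n + max (-(γ n)) (min (γ n) (h (n+1) + 1/2 - chase h γ n))

lemma chase_succ (h γ : ℕ → ℝ) (n : ℕ) :
    chase h γ (n+1) = chase h γ n + max (-(γ n)) (min (γ n) (h (n+1) + 1/2 - chase h γ n)) := rfl

lemma abs_chase_step (h γ : ℕ → ℝ) (hγ : ∀ k, 0 ≤ γ k) (n : ℕ) :
    |chase h γ (n+1) - chase h γ n| ≤ γ n := by
  rw [chase_succ]
  rw [abs_le]
  constructor
  · have := le_max_left (-(γ n)) (min (γ n) (h (n+1) + 1/2 - chase h γ n))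
    linarith
  · have h1 : max (-(γ n)) (min (γ n) (h (n+1) + 1/2 - chase h γ n)) ≤ γ n := by
      refine max_le ?_ (min_le_left _ _)
      linarith [hγ n]
    linarith

lemma abs_chase_window (h γ : ℕ → ℝ) (hγ : ∀ k, 0 ≤ γ k) (ε : ℝ)
    (n : ℕ) (hn : ∀ k, n ≤ k → γ k ≤ ε) :
    ∀ m : ℕ, |chase h γ (n+m) - chase h γ n| ≤ m * ε := by
  intro m
  induction m with
  | zero => simp
  | succ m ih =>
    have h1 := abs_chase_step h γ hγ (n+m)
    have h2 := hn (n+m) (Nat.le_add_right n m)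
    have := abs_sub_abs_le_abs_sub (chase h γ (n+m+1) - chase h γ n) (chase h γ (n+m) - chase h γ n)
    have htri : |chase h γ (n+(m+1)) - chase h γ n| ≤
        |chase h γ (n+m+1) - chase h γ (n+m)| + |chase h γ (n+m) - chase h γ n| := by
      rw [show n+(m+1) = n+m+1 by ring]
      calc |chase h γ (n+m+1) - chase h γ n|
          = |(chase h γ (n+m+1) - chase h γ (n+m)) + (chase h γ (n+m) - chase h γ n)| := by ring_nf
        _ ≤ _ := abs_add_le _ _
    push_cast
    calc |chase h γ (n+(m+1)) - chase h γ n| ≤ _ := htri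
      _ ≤ ε + m * ε := by exact add_le_add (le_trans h1 h2) ih
      _ = (m+1) * ε := by ring

lemma floor_diff_bound (x y s : ℝ) (hs : 0 ≤ s)
    (hxy : |y - x - s| ≤ (if Int.fract s = 0 then 1/2 else min (Int.fract s) (1 - Int.fract s))) :
    |((⌊y⌋ : ℝ) - (⌊x⌋ : ℝ) - s)| ≤ 1 := by
  have hfx := Int.floor_le x
  have hfx' := Int.lt_floor_add_one x
  have hfs := Int.floor_le s
  have hfs' := Int.lt_floor_add_one s
  have hfract : Int.fract s = s - ⌊s⌋ := rfl
  rw [abs_le] at hxy ⊢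
  by_cases h0 : Int.fract s = 0
  · rw [if_pos h0] at hxy
    have hsint : s = (⌊s⌋ : ℝ) := by rw [hfract] at h0; linarith
    constructor
    · have hylow : (x - 1/2) + (⌊s⌋ : ℝ) ≤ y := by rw [← hsint]; linarith [hxy.1]
      have h1 : ⌊(x - 1/2) + (⌊s⌋:ℝ)⌋ ≤ ⌊y⌋ := Int.floor_mono hylow
      rw [Int.floor_add_intCast] at h1
      have h2 : (⌊x⌋ : ℤ) - 1 ≤ ⌊x - 1/2⌋ := by
        rw [Int.le_floor]; push_cast; linarith
      have : (⌊x⌋ : ℤ) - 1 + ⌊s⌋ ≤ ⌊y⌋ := by omega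
      have := (Int.cast_le (R := ℝ)).2 this
      push_cast at this
      linarith [this, hsint]
    · have hyup : y ≤ (x + 1/2) + (⌊s⌋ : ℝ) := by rw [← hsint]; linarith [hxy.2]
      have h1 : ⌊y⌋ ≤ ⌊(x + 1/2) + (⌊s⌋:ℝ)⌋ := Int.floor_mono hyup
      rw [Int.floor_add_intCast] at h1
      have h2 : ⌊x + 1/2⌋ ≤ ⌊x⌋ + 1 := by
        have : x + 1/2 < ((⌊x⌋ + 2 : ℤ) : ℝ) := by push_cast; linarith
        have := Int.floor_lt.2 this
        omega
      have : ⌊y⌋ ≤ ⌊x⌋ + 1 + ⌊s⌋ := by omega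
      have := (Int.cast_le (R := ℝ)).2 this
      push_cast at this
      linarith [this, hsint]
  · rw [if_neg h0] at hxy
    have hfr0 : 0 < Int.fract s := lt_of_le_of_ne (Int.fract_nonneg s) (Ne.symm h0)
    constructor
    · have hylow : x + (⌊s⌋ : ℝ) ≤ y := by
        have h3 := hxy.1
        have : s - min (Int.fract s) (1 - Int.fract s) ≥ (⌊s⌋:ℝ) := by
          have := min_le_left (Int.fract s) (1 - Int.fract s)
          rw [hfract] at this ⊢
          linarith
        linarith
      have h1 : ⌊x + (⌊s⌋:ℝ)⌋ ≤ ⌊y⌋ := Int.floor_mono hylow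
      rw [Int.floor_add_intCast] at h1
      have := (Int.cast_le (R := ℝ)).2 h1
      push_cast at this
      linarith
    · have hyup : y ≤ (x + 1) + (⌊s⌋ : ℝ) := by
        have h3 := hxy.2
        have : s + min (Int.fract s) (1 - Int.fract s) ≤ (⌊s⌋:ℝ) + 1 := by
          have := min_le_right (Int.fract s) (1 - Int.fract s)
          rw [hfract] at this ⊢
          linarith
        linarith
      have h1 : ⌊y⌋ ≤ ⌊(x + 1) + (⌊s⌋:ℝ)⌋ := Int.floor_mono hyup
      rw [Int.floor_add_intCast] at h1
      have h2 : ⌊x + 1⌋ = ⌊x⌋ + 1 := by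
        rw [show x + 1 = x + ((1:ℤ):ℝ) by push_cast; ring, Int.floor_add_intCast]
      rw [h2] at h1
      have := (Int.cast_le (R := ℝ)).2 h1
      push_cast at this
      linarith



noncomputable def runMax (h : ℕ → ℝ) : ℕ → ℝ
  | 0 => max 1 |h 0|
  | n+1 => max (runMax h n) |h (n+1)|

lemma runMax_succ (h : ℕ → ℝ) (n : ℕ) : runMax h (n+1) = max (runMax h n) |h (n+1)| := rfl

lemma one_le_runMax (h : ℕ → ℝ) : ∀ n, 1 ≤ runMax h n := by
  intro n
  induction n with
  | zero => exact le_max_left _ _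
  | succ n ih => exact le_trans ih (le_max_left _ _)

lemma runMax_mono (h : ℕ → ℝ) : Monotone (runMax h) := by
  refine monotone_nat_of_le_succ (fun n => le_max_left _ _)

lemma abs_le_runMax (h : ℕ → ℝ) {j n : ℕ} (hj : j ≤ n) : |h j| ≤ runMax h n := by
  refine le_trans ?_ (runMax_mono h hj)
  cases j with
  | zero => exact le_max_right _ _
  | succ j => exact le_max_right _ _

lemma runMax_le_of_bound (h : ℕ → ℝ) (N : ℕ) (b : ℕ → ℝ) (hbmono : Monotone b)
    (hb : ∀ j, N ≤ j → |h j| ≤ b j) :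
    ∀ n, N ≤ n → runMax h n ≤ max (runMax h N) (b n) := by
  intro n hn
  induction n with
  | zero =>
    have : N = 0 := Nat.le_zero.mp hn
    subst this; exact le_max_left _ _
  | succ n ih =>
    rcases Nat.lt_or_ge N (n+1) with hlt | hge
    · have hNn : N ≤ n := by omega
      rw [runMax_succ]
      refine max_le (le_trans (ih hNn) ?_) (le_trans (hb (n+1) (by omega)) (le_max_right _ _))
      exact max_le_max (le_refl _) (hbmono (by omega))
    · have : N = n + 1 := by omega
      subst this
      exact le_max_left _ _

lemma runMax_sublinear (h : ℕ → ℝ) (hh : Tendsto (fun n => h n / n) atTop (nhds 0)) :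
    Tendsto (fun n => runMax h n / n) atTop (nhds 0) := by
  rw [Metric.tendsto_atTop]
  intro ε hε
  have habs : Tendsto (fun n => |h n| / (n:ℝ)) atTop (nhds 0) := by
    have := hh.abs
    simp only [abs_zero] at this
    refine this.congr' ?_
    filter_upwards [eventually_ge_atTop 1] with n hn
    rw [abs_div, abs_of_nonneg (by positivity : (0:ℝ) ≤ (n:ℝ))]
  have h2 := (habs.eventually_lt_const (show (0:ℝ) < ε/2 by linarith)).and (eventually_ge_atTop 1)
  rw [eventually_atTop] at h2
  obtain ⟨N₀, hN₀⟩ := h2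
  have hb : ∀ j, N₀ ≤ j → |h j| ≤ (ε/2) * j := by
    intro j hj
    obtain ⟨h1, hj1⟩ := hN₀ j hj
    have hjpos : (0:ℝ) < j := by exact_mod_cast hj1
    have := (div_lt_iff₀ hjpos).1 h1
    linarith
  have hkey := runMax_le_of_bound h N₀ (fun n => (ε/2) * n)
    (fun i j hij => by
      simp only
      have : (i:ℝ) ≤ j := by exact_mod_cast hij
      nlinarith) hb
  obtain ⟨M, hM⟩ := exists_nat_ge (2 * runMax h N₀ / ε)
  refine ⟨max (max N₀ M) 1, fun n hn => ?_⟩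
  have hnN₀ : N₀ ≤ n := le_trans (le_trans (le_max_left _ _) (le_max_left _ _)) hn
  have hnM : M ≤ n := le_trans (le_trans (le_max_right _ _) (le_max_left _ _)) hn
  have hn1 : 1 ≤ n := le_trans (le_max_right _ _) hn
  have hnpos : (0:ℝ) < n := by exact_mod_cast hn1
  have hrm := hkey n hnN₀
  have hMn : 2 * runMax h N₀ / ε ≤ n := le_trans hM (by exact_mod_cast hnM)
  have hrn : runMax h N₀ ≤ (ε/2) * n := by
    rw [div_le_iff₀ (by linarith : (0:ℝ) < ε)] at hMn
    nlinarith
  have hfin : runMax h n ≤ (ε/2)*n := le_trans hrm (max_le hrn (le_refl _))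
  have hpos : 0 < runMax h n := lt_of_lt_of_le one_pos (one_le_runMax h n)
  rw [Real.dist_eq, sub_zero, abs_of_nonneg (by positivity)]
  rw [div_lt_iff₀ hnpos]
  nlinarith



lemma vol_atTop (u : ℕ → ℕ) (hu1 : ∀ n, 1 ≤ u n) (a : ℝ) (ha1 : 1 < a)
    (ha : Tendsto (fun n : ℕ => (u n : ℝ) ^ ((1:ℝ)/n)) atTop (nhds a)) :
    Tendsto u atTop atTop := by
  rw [← tendsto_natCast_atTop_iff (R := ℝ)]
  set b := (1+a)/2 with hb
  have hb1 : 1 < b := by rw [hb]; linarith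
  have hba : b < a := by rw [hb]; linarith
  have hev := (ha.eventually_const_le hba).and (eventually_ge_atTop 1)
  have hpow : Tendsto (fun n : ℕ => b ^ n) atTop atTop :=
    tendsto_pow_atTop_atTop_of_one_lt hb1
  refine tendsto_atTop_mono' atTop ?_ hpow
  filter_upwards [hev] with n ⟨h1, hn1⟩
  have hupos : (0:ℝ) < u n := by exact_mod_cast hu1 n
  have hnne : ((1:ℝ)/n) * n = 1 := by
    field_simp
  calc (b:ℝ)^n = (b:ℝ) ^ ((n:ℕ):ℝ) := by rw [Real.rpow_natCast]
    _ ≤ ((u n : ℝ) ^ ((1:ℝ)/n)) ^ ((n:ℕ):ℝ) := by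
        refine Real.rpow_le_rpow (by linarith) h1 (by positivity)
    _ = (u n : ℝ) ^ (((1:ℝ)/n) * n) := by
        rw [← Real.rpow_mul hupos.le]
    _ = u n := by rw [hnne, Real.rpow_one]

lemma log_vol (u : ℕ → ℕ) (hu1 : ∀ n, 1 ≤ u n) (a : ℝ) (ha1 : 1 < a)
    (ha : Tendsto (fun n : ℕ => (u n : ℝ) ^ ((1:ℝ)/n)) atTop (nhds a)) :
    Tendsto (fun n : ℕ => Real.log (u n) / n) atTop (nhds (Real.log a)) := by
  have hcont := (Real.continuousAt_log (by linarith : a ≠ 0)).tendsto.comp ha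
  refine hcont.congr' ?_
  filter_upwards [eventually_ge_atTop 1] with n hn
  have hupos : (0:ℝ) < u n := by exact_mod_cast hu1 n
  simp only [Function.comp_apply]
  rw [Real.log_rpow hupos]
  ring

lemma freq_pigeonhole (K : ℕ) (p : ℕ → ℕ → Prop)
    (hfreq : ∃ᶠ n in atTop, ∃ i, i < K ∧ p i n) :
    ∃ i, i < K ∧ ∃ᶠ n in atTop, p i n := by
  by_contra hcon
  push_neg at hcon
  have hev : ∀ᶠ n in atTop, ∀ i ∈ Finset.range K, ¬ p i n := by
    rw [eventually_all_finset]
    intro i hi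
    rw [Finset.mem_range] at hi
    have := hcon i hi
    exact this
  obtain ⟨n, ⟨i, hiK, hip⟩, hall⟩ := (hfreq.and_eventually hev).exists
  exact hall i (Finset.mem_range.2 hiK) hip
/-- the almost-linear perturbation function of slope `c = log a / log a'`. -/
theorem exists_almost_linear_perturbation {G G' : Type*} [Group G] [Group G']
    (S : Finset G) (S' : Finset G')
    (hsym : ∀ s ∈ S, s⁻¹ ∈ S) (hsym' : ∀ s ∈ S', s⁻¹ ∈ S')
    (hgen : ∀ g : G, ∃ n : ℕ, g ∈ wordBall (S : Set G) n)
    (hgen' : ∀ g : G', ∃ n : ℕ, g ∈ wordBall (S' : Set G') n)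
    (a a' : ℝ) (ha1 : 1 < a) (ha1' : 1 < a')
    (ha : Tendsto (fun n : ℕ => (ballVol (S : Set G) n : ℝ) ^ ((1 : ℝ) / n)) atTop (nhds a))
    (ha' : Tendsto (fun n : ℕ => (ballVol (S' : Set G') n : ℝ) ^ ((1 : ℝ) / n)) atTop (nhds a'))
    (c : ℝ) (hc : c = Real.log a / Real.log a') :
    ∃ f : ℕ → ℕ, Monotone f ∧ f 0 = 0 ∧
      ∃ r : ℕ → ℕ, StrictMono r ∧
        (∃ Cl Cu : ℝ, 0 < Cl ∧
          ∀ j : ℕ,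
            Cl ≤ (ballVol (S' : Set G') (f (r j)) : ℝ) / (ballVol (S : Set G) (r j) : ℝ) ∧
            (ballVol (S' : Set G') (f (r j)) : ℝ) / (ballVol (S : Set G) (r j) : ℝ) ≤ Cu) ∧
        (∀ m : ℕ, ∃ N : ℕ, ∀ n : ℕ, N ≤ n →
          |(f (n + m) : ℝ) - (f n : ℝ) - c * m| ≤ 1) := by
  classical
  set v : ℕ → ℕ := fun n => ballVol (S : Set G) n with hvdef
  set v' : ℕ → ℕ := fun n => ballVol (S' : Set G') n with hv'def
  have hv1 : ∀ n, 1 ≤ v n := fun n => one_le_ballVol S n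
  have hv'1 : ∀ n, 1 ≤ v' n := fun n => one_le_ballVol S' n
  have hvmono : Monotone v := ballVol_mono S
  have hv'mono : Monotone v' := ballVol_mono S'
  have hv'succ : ∀ n, v' (n+1) ≤ v' 1 * v' n := fun n => ballVol_succ_le S' n
  have hla : 0 < Real.log a := Real.log_pos ha1
  have hla' : 0 < Real.log a' := Real.log_pos ha1'
  have hcpos : 0 < c := hc ▸ div_pos hla hla'
  have hvtop : Tendsto v atTop atTop := vol_atTop v hv1 a ha1 ha
  have hv'top : Tendsto v' atTop atTop := vol_atTop v' hv'1 a' ha1' ha'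
  have hex : ∀ n, ∃ m, v n ≤ v' m := fun n => (hv'top.eventually_ge_atTop (v n)).exists
  set Φ : ℕ → ℕ := fun n => Nat.find (hex n) with hΦdef
  have hΦspec : ∀ n, v n ≤ v' (Φ n) := fun n => Nat.find_spec (hex n)
  have hΦmono : Monotone Φ :=
    fun n n' hnn' => Nat.find_mono (fun m hm => le_trans (hvmono hnn') hm)
  have hΦupper : ∀ n, v' (Φ n) ≤ v' 1 * v n := by
    intro n
    rcases hn : Φ n with _ | m
    · have h0 : v' 0 ≤ v n := by
        have : v' 0 = 1 := by
          show ballVol (S' : Set G') 0 = 1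
          unfold ballVol
          rw [wordBall_zero]
          exact Set.ncard_singleton 1
        have := hv1 n
        omega
      calc v' 0 ≤ v n := h0
        _ ≤ v' 1 * v n := Nat.le_mul_of_pos_left _ (hv'1 1)
    · have hlt : v' m < v n := by
        have := Nat.find_min (hex n) (by omega : m < Φ n)
        omega
      calc v' (m+1) ≤ v' 1 * v' m := hv'succ m
        _ ≤ v' 1 * v n := Nat.mul_le_mul_left _ (by omega)
  have hΦtop : Tendsto Φ atTop atTop := by
    rw [tendsto_atTop]
    intro M
    filter_upwards [hvtop.eventually_ge_atTop ((Finset.range M).sup v' + 1)] with n hn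
    rw [hΦdef]
    simp only
    rw [Nat.le_find_iff]
    intro m hm
    have : v' m ≤ (Finset.range M).sup v' := Finset.le_sup (Finset.mem_range.2 hm)
    omega
  clear_value Φ
  clear hΦdef
  have hlogv := log_vol v hv1 a ha1 ha
  have hlogv' := log_vol v' hv'1 a' ha1' ha'
  have hhalf : Tendsto (fun n : ℕ => Real.log (v' 1) / n + Real.log (v n) / n) atTop
      (nhds (Real.log a)) := by
    have := (tendsto_const_div_atTop_nhds_zero_nat (Real.log (v' 1))).add hlogv
    simpa using this
  have hlogΦn : Tendsto (fun n => Real.log (v' (Φ n)) / n) atTop (nhds (Real.log a)) := by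
    refine tendsto_of_tendsto_of_tendsto_of_le_of_le' hlogv hhalf ?_ ?_
    · filter_upwards with n
      have h1 : (0:ℝ) < v n := by exact_mod_cast hv1 n
      have h2 : (v n : ℝ) ≤ v' (Φ n) := by exact_mod_cast hΦspec n
      gcongr
    · filter_upwards with n
      have h2 : (v' (Φ n) : ℝ) ≤ (v' 1 : ℝ) * (v n : ℝ) := by exact_mod_cast hΦupper n
      have hvp : (0:ℝ) < (v n : ℝ) := by exact_mod_cast hv1 n
      have hv'p : (0:ℝ) < (v' 1 : ℝ) := by exact_mod_cast hv'1 1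
      have h3 : Real.log (v' (Φ n)) ≤ Real.log (v' 1) + Real.log (v n) := by
        rw [← Real.log_mul hv'p.ne' hvp.ne']
        exact Real.log_le_log (by exact_mod_cast hv'1 (Φ n)) h2
      have h4 : Real.log (v' (Φ n)) / n ≤ (Real.log (v' 1) + Real.log (v n)) / n := by
        gcongr
      rw [add_div] at h4
      exact h4
  have hlogΦΦ : Tendsto (fun n => Real.log (v' (Φ n)) / (Φ n : ℝ)) atTop (nhds (Real.log a')) :=
    hlogv'.comp hΦtop
  have hΦc : Tendsto (fun n => (Φ n : ℝ) / n) atTop (nhds c) := by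
    rw [hc]
    refine (hlogΦn.div hlogΦΦ (ne_of_gt hla')).congr' ?_
    filter_upwards [hΦtop.eventually_ge_atTop 1, hvtop.eventually_ge_atTop 2,
      eventually_ge_atTop 1] with n hΦ1 hv2 hn1
    have hL : 0 < Real.log (v' (Φ n)) := by
      refine Real.log_pos ?_
      have : 2 ≤ v' (Φ n) := le_trans hv2 (hΦspec n)
      exact_mod_cast this
    have hnR : (0:ℝ) < n := by exact_mod_cast hn1
    have hΦR : (0:ℝ) < (Φ n : ℝ) := by exact_mod_cast hΦ1
    rw [Pi.div_apply]
    field_simp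
  -- the perturbation sequence
  set w : ℕ → ℝ := fun n => (Φ n : ℝ) - c * n with hwdef
  have hwn : Tendsto (fun n => w n / n) atTop (nhds 0) := by
    have h1 : Tendsto (fun n : ℕ => (Φ n : ℝ)/n - c * (n:ℝ) / n) atTop (nhds (c - c)) := by
      refine Tendsto.sub hΦc ?_
      have : Tendsto (fun n : ℕ => c * ((n:ℝ) / n)) atTop (nhds (c * 1)) := by
        refine Tendsto.const_mul c ?_
        refine tendsto_const_nhds.congr' ?_
        filter_upwards [eventually_ge_atTop 1] with n hn
        have : (0:ℝ) < n := by exact_mod_cast hn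
        rw [div_self this.ne']
      simpa [mul_comm] using this.congr' (by filter_upwards with n; ring)
    rw [sub_self] at h1
    refine h1.congr' ?_
    filter_upwards with n
    rw [hwdef]
    ring
  have hwstep : ∀ k, w k - c ≤ w (k+1) := by
    intro k
    have := hΦmono (Nat.le_succ k)
    rw [hwdef]
    simp only
    have : (Φ k : ℝ) ≤ (Φ (k+1) : ℝ) := by exact_mod_cast this
    push_cast
    linarith
  have hwQ : ∀ n, |w n| ≤ runMax w n := fun n => abs_le_runMax w (le_refl n)
  set Q : ℕ → ℝ := runMax w with hQdef
  have hQ1 : ∀ n, 1 ≤ Q n := one_le_runMax w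
  have hQmono : Monotone Q := runMax_mono w
  have hQo : Tendsto (fun n => Q n / n) atTop (nhds 0) := runMax_sublinear w hwn
  set c₀ : ℝ := min c (1/2) with hc₀def
  have hc₀pos : 0 < c₀ := lt_min hcpos (by norm_num)
  have hc₀c : c₀ ≤ c := min_le_left _ _
  have hc₀half : c₀ ≤ 1/2 := min_le_right _ _
  set γ : ℕ → ℝ := fun k => min c₀ (4 * Q k / (k+1)) with hγdef
  have hγpos : ∀ k, 0 < γ k := by
    intro k
    refine lt_min hc₀pos (div_pos (by nlinarith [hQ1 k]) (by positivity))
  have hγc₀ : ∀ k, γ k ≤ c₀ := fun k => min_le_left _ _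
  have hγ0 : Tendsto γ atTop (nhds 0) := by
    have h4 : Tendsto (fun k : ℕ => 4 * (Q k / k)) atTop (nhds 0) := by
      simpa using hQo.const_mul 4
    refine tendsto_of_tendsto_of_tendsto_of_le_of_le' tendsto_const_nhds h4
      (by filter_upwards with k; exact (hγpos k).le) ?_
    · filter_upwards [eventually_ge_atTop 1] with k hk
      have hkR : (1:ℝ) ≤ k := by exact_mod_cast hk
      refine le_trans (min_le_right _ _) ?_
      rw [mul_div_assoc]
      gcongr
      · nlinarith [hQ1 k]
      · linarith
  set g : ℕ → ℝ := chase w γ with hgdef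
  have hg0 : g 0 = 0 := rfl
  have hgstep : ∀ k, |g (k+1) - g k| ≤ γ k := abs_chase_step w γ (fun k => (hγpos k).le)
  set u : ℕ → ℝ := fun n => g n - w n with hudef
  have hueq : ∀ n, u n = g n - w n := fun n => rfl
  have hweq : ∀ n, w n = ((Φ n : ℕ) : ℝ) - c * n := fun n => rfl
  have hγeq : ∀ k, γ k = min c₀ (4 * Q k / ((k:ℝ)+1)) := fun k => rfl
  have hclamp : ∀ k, (g (k+1) = w (k+1) + 1/2) ∨
      (g (k+1) = g k + γ k ∧ γ k ≤ w (k+1) + 1/2 - g k) ∨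
      (g (k+1) = g k - γ k ∧ w (k+1) + 1/2 - g k ≤ -(γ k)) := by
    clear hueq hγeq
    intro k
    have hstep : g (k+1) = g k + max (-(γ k)) (min (γ k) (w (k+1) + 1/2 - g k)) :=
      chase_succ w γ k
    set d := w (k+1) + 1/2 - g k with hd
    rcases le_total d (-(γ k)) with hle | hge
    · right; right
      refine ⟨?_, hle⟩
      rw [hstep, min_eq_right (le_trans hle (by linarith [hγpos k])),
        max_eq_left hle]
      ring
    · rcases le_total d (γ k) with hle2 | hge2
      · left
        rw [hstep, min_eq_right hle2, max_eq_right hge, hd]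
        ring
      · right; left
        refine ⟨?_, hge2⟩
        rw [hstep, min_eq_left hge2, max_eq_right (by linarith [hγpos k])]
  clear_value u g γ Q w c₀
  -- the band is visited infinitely often
  have hband : ∃ᶠ n in atTop, u n ∈ Set.Ico (1/2 : ℝ) (c + 2) := by
    by_contra hcon
    rw [Filter.not_frequently] at hcon
    simp only [Set.mem_Ico, not_and, not_lt, eventually_atTop] at hcon
    obtain ⟨N₀, hN₀⟩ := hcon
    -- dichotomy
    have hdi : ∀ n, N₀ ≤ n → u n < 1/2 ∨ c + 2 ≤ u n := by
      intro n hn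
      rcases lt_or_ge (u n) (1/2) with h | h
      · exact Or.inl h
      · exact Or.inr (hN₀ n hn h)
    by_cases hA : ∃ n₀, N₀ ≤ n₀ ∧ u n₀ < 1/2
    · -- up-escape
      obtain ⟨n₀, hn₀N, hn₀u⟩ := hA
      have habsorb : ∀ n, n₀ ≤ n → u n < 1/2 := by
        intro n hn
        induction n, hn using Nat.le_induction with
        | base => exact hn₀u
        | succ k hk ih =>
          have hk1 : N₀ ≤ k + 1 := by omega
          rcases hclamp k with hmid | ⟨hup, hupc⟩ | ⟨hdn, hdnc⟩
          · exfalso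
            have : u (k+1) = 1/2 := by rw [hueq]; rw [hmid]; ring
            rcases hdi (k+1) hk1 with h | h <;> linarith [hcpos]
          · have : u (k+1) ≤ 1/2 := by
              rw [hueq]; rw [hup]; linarith [hupc]
            rcases hdi (k+1) hk1 with h | h
            · exact h
            · exfalso; linarith [hcpos]
          · exfalso
            have h1 : 1/2 ≤ u (k+1) := by
              rw [hueq]; rw [hdn]; linarith [hdnc]
            have h2 : u (k+1) < c + 2 := by
              rw [hueq]; rw [hdn]
              have hws := hwstep k
              have huk : u k = g k - w k := hueq k
              have hγp := hγpos k
              have hhalfγ : γ k ≤ 1/2 := le_trans (hγc₀ k) hc₀half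
              rw [huk] at ih
              linarith
            rcases hdi (k+1) hk1 with h | h <;> linarith
      have hforce : ∀ k, n₀ ≤ k → g (k+1) = g k + γ k := by
        intro k hk
        rcases hclamp k with hmid | ⟨hup, _⟩ | ⟨hdn, hdnc⟩
        · exfalso
          have : u (k+1) = 1/2 := by rw [hueq]; rw [hmid]; ring
          have := habsorb (k+1) (by omega)
          linarith
        · exact hup
        · exfalso
          have h1 : 1/2 ≤ u (k+1) := by
            rw [hueq]; rw [hdn]; linarith [hdnc]
          have := habsorb (k+1) (by omega)
          linarith
      have hsum : ∀ n, n₀ ≤ n → g n = g n₀ + ∑ k ∈ Finset.Ico n₀ n, γ k := by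
        intro n hn
        induction n, hn using Nat.le_induction with
        | base => simp
        | succ k hk ih =>
          rw [Finset.sum_Ico_succ_top hk, hforce k hk, ih]
          ring
      refine core_contra Q hQ1 hQmono hQo c₀ hc₀pos γ hγeq (1/2 - g n₀) n₀ ?_
      intro n hn
      have h1 := hsum n hn
      have h2 := habsorb n hn
      have h3 : w n ≤ Q n := le_trans (le_abs_self _) (hwQ n)
      have hun : u n = g n - w n := hueq n
      linarith
    · -- down-escape
      push_neg at hA
      have hlow : ∀ n, N₀ ≤ n → c + 2 ≤ u n := by
        intro n hn
        rcases hdi n hn with h | h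
        · exact absurd h (not_lt.2 (by linarith [hA n hn]))
        · exact h
      have hforce : ∀ k, N₀ ≤ k → g (k+1) = g k - γ k := by
        intro k hk
        have hk1 : N₀ ≤ k + 1 := by omega
        rcases hclamp k with hmid | ⟨hup, hupc⟩ | ⟨hdn, _⟩
        · exfalso
          have : u (k+1) = 1/2 := by rw [hueq]; rw [hmid]; ring
          have := hlow (k+1) hk1
          linarith [hcpos]
        · exfalso
          have : u (k+1) ≤ 1/2 := by
            rw [hueq]; rw [hup]; linarith [hupc]
          have := hlow (k+1) hk1
          linarith [hcpos]
        · exact hdn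
      have hsum : ∀ n, N₀ ≤ n → g n = g N₀ - ∑ k ∈ Finset.Ico N₀ n, γ k := by
        intro n hn
        induction n, hn using Nat.le_induction with
        | base => simp
        | succ k hk ih =>
          rw [Finset.sum_Ico_succ_top hk, hforce k hk, ih]
          ring
      refine core_contra Q hQ1 hQmono hQo c₀ hc₀pos γ hγeq (g N₀) N₀ ?_
      intro n hn
      have h1 := hsum n hn
      have h2 := hlow n hn
      have h3 : -(Q n) ≤ w n := by
        have := hwQ n
        rw [abs_le] at this
        linarith [this.1]
      have hun : u n = g n - w n := hueq n
      linarith [hcpos]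
    -- pigeonhole into width-1/2 cells
  set K : ℕ := ⌈2*c⌉₊ + 3 with hKdef
  clear_value K
  have hcell : ∃ i, i < K ∧ ∃ᶠ n in atTop,
      u n ∈ Set.Ico ((1:ℝ)/2 + i/2) ((1:ℝ)/2 + i/2 + 1/2) := by
    refine freq_pigeonhole K
      (fun i n => u n ∈ Set.Ico ((1:ℝ)/2 + i/2) ((1:ℝ)/2 + i/2 + 1/2)) ?_
    refine hband.mono ?_
    rintro n ⟨hn1, hn2⟩
    refine ⟨⌊(u n - 1/2)*2⌋₊, ?_, ?_, ?_⟩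
    · have h1 : (u n - 1/2)*2 < 2*c + 3 := by linarith
      have h2 : (⌊(u n - 1/2)*2⌋₊ : ℝ) ≤ (u n - 1/2)*2 := Nat.floor_le (by linarith)
      have h3 : (2*c : ℝ) ≤ ((⌈2*c⌉₊ : ℕ) : ℝ) := Nat.le_ceil _
      have h4 : ((⌊(u n - 1/2)*2⌋₊ : ℕ) : ℝ) < ((K:ℕ) : ℝ) := by
        rw [hKdef]; push_cast; linarith
      exact_mod_cast h4
    · have h2 : (⌊(u n - 1/2)*2⌋₊ : ℝ) ≤ (u n - 1/2)*2 := Nat.floor_le (by linarith)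
      linarith
    · have h2 : (u n - 1/2)*2 < (⌊(u n - 1/2)*2⌋₊ : ℝ) + 1 := Nat.lt_floor_add_one _
      linarith
  obtain ⟨i, hiK, hfreq⟩ := hcell
  set t : ℝ := 1/2 + i/2 with htdef
  have ht : (1:ℝ)/2 ≤ t := by
    rw [htdef]
    have : (0:ℝ) ≤ i/2 := by positivity
    linarith
  clear_value t
  obtain ⟨r, hrmono, hr⟩ := extraction_of_frequently_atTop hfreq
  set X : ℕ → ℝ := fun n => c * n + g n - t with hXdef
  have hXeq : ∀ n, X n = c*n + g n - t := fun n => rfl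
  clear_value X
  have hXstep : ∀ n, X n + (c - γ n) ≤ X (n+1) := by
    intro n
    rw [hXeq, hXeq]
    have hgs := hgstep n
    rw [abs_le] at hgs
    push_cast
    linarith [hgs.1]
  have hXmono : Monotone X := monotone_nat_of_le_succ (fun n => by
    have h1 := hXstep n
    have h2 := hγc₀ n
    linarith [hc₀c])
  set f : ℕ → ℕ := fun n => (⌊X n⌋).toNat with hfdef
  have hfeq : ∀ n, f n = (⌊X n⌋).toNat := fun n => rfl
  clear_value f
  refine ⟨f, ?_, ?_, r, hrmono, ⟨1, ((v' 1 : ℕ) : ℝ), one_pos, ?_⟩, ?_⟩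
  · intro n m hnm
    rw [hfeq, hfeq]
    exact Int.toNat_le_toNat (Int.floor_mono (hXmono hnm))
  · rw [hfeq, Int.toNat_eq_zero]
    refine Int.floor_nonpos ?_
    rw [hXeq]
    push_cast
    rw [hg0]
    linarith
  · intro j
    have hu := hr j
    rw [Set.mem_Ico] at hu
    have hfΦ : f (r j) = Φ (r j) := by
      rw [hfeq]
      have hX : X (r j) = ((Φ (r j) : ℕ) : ℝ) + (u (r j) - t) := by
        rw [hXeq]
        have h1 := hueq (r j)
        have h2 := hweq (r j)
        linarith
      have hfl : ⌊X (r j)⌋ = ((Φ (r j) : ℕ) : ℤ) := by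
        rw [Int.floor_eq_iff]
        constructor
        · rw [hX]; push_cast; linarith [hu.1, ht]
        · rw [hX]; push_cast; linarith [hu.2]
      rw [hfl, Int.toNat_natCast]
    have hvpos : (0:ℝ) < ((v (r j) : ℕ) : ℝ) := by
      have := hv1 (r j); exact_mod_cast this
    constructor
    · show (1:ℝ) ≤ ((v' (f (r j)) : ℕ) : ℝ) / ((v (r j) : ℕ) : ℝ)
      rw [le_div_iff₀ hvpos, one_mul, hfΦ]
      have := hΦspec (r j)
      exact_mod_cast this
    · show ((v' (f (r j)) : ℕ) : ℝ) / ((v (r j) : ℕ) : ℝ) ≤ ((v' 1 : ℕ) : ℝ)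
      rw [div_le_iff₀ hvpos, hfΦ]
      have := hΦupper (r j)
      exact_mod_cast this
  · intro m
    have hs0 : (0:ℝ) ≤ c * m := mul_nonneg hcpos.le (Nat.cast_nonneg m)
    set β : ℝ := if Int.fract (c * (m:ℝ)) = 0 then 1/2
      else min (Int.fract (c * (m:ℝ))) (1 - Int.fract (c * (m:ℝ))) with hβdef
    have hβpos : 0 < β := by
      rw [hβdef]; split_ifs with h0
      · norm_num
      · have h1 : 0 < Int.fract (c * (m:ℝ)) :=
          lt_of_le_of_ne (Int.fract_nonneg _) (Ne.symm h0)
        have h2 := Int.fract_lt_one (c * (m:ℝ))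
        exact lt_min h1 (by linarith)
    have hev := hγ0.eventually_le_const (div_pos hβpos (by positivity : (0:ℝ) < (m:ℝ)+1))
    rw [eventually_atTop] at hev
    obtain ⟨N₃, hN₃⟩ := hev
    have hev2 := hγ0.eventually_le_const (half_pos hcpos)
    rw [eventually_atTop] at hev2
    obtain ⟨N₂, hN₂⟩ := hev2
    have hXlin : ∀ k : ℕ, X N₂ + k*(c/2) ≤ X (N₂+k) := by
      intro k
      induction k with
      | zero => simp
      | succ k ih =>
        have h1 := hXstep (N₂+k)
        have h2 := hN₂ (N₂+k) (by omega)
        have h3 : N₂ + (k+1) = (N₂ + k) + 1 := by ring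
        rw [h3]
        push_cast
        push_cast at ih
        linarith
    obtain ⟨j₀, hj₀⟩ := exists_nat_ge ((0 - X N₂) * (2/c))
    have hXpos : ∀ n, N₂ + j₀ ≤ n → 0 ≤ X n := by
      intro n hn
      have h1 := hXlin j₀
      have h2 : X (N₂ + j₀) ≤ X n := hXmono hn
      have h3 : (0 - X N₂) * (2/c) * (c/2) ≤ (j₀:ℝ) * (c/2) :=
        mul_le_mul_of_nonneg_right hj₀ (half_pos hcpos).le
      have h4 : (0 - X N₂) * (2/c) * (c/2) = - X N₂ := by
        field_simp
        ring
      linarith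
    refine ⟨max N₃ (N₂ + j₀), fun n hn => ?_⟩
    have hn₃ : N₃ ≤ n := le_trans (le_max_left _ _) hn
    have hn₁ : N₂ + j₀ ≤ n := le_trans (le_max_right _ _) hn
    have hX1 : 0 ≤ X n := hXpos n hn₁
    have hX2 : 0 ≤ X (n+m) := hXpos (n+m) (by omega)
    have hwin := abs_chase_window w γ (fun k => (hγpos k).le) (β/(m+1)) n
      (fun k hk => hN₃ k (by omega)) m
    rw [← hgdef] at hwin
    have hper : |X (n+m) - X n - c * (m:ℝ)| ≤ β := by
      have h1 : X (n+m) - X n - c * (m:ℝ) = g (n+m) - g n := by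
        rw [hXeq, hXeq]; push_cast; ring
      rw [h1]
      refine le_trans hwin ?_
      have h2 : (m:ℝ)/(m+1) ≤ 1 := by
        rw [div_le_one (by positivity)]; linarith
      calc (m:ℝ) * (β/(m+1)) = β * ((m:ℝ)/(m+1)) := by ring
        _ ≤ β * 1 := by nlinarith [hβpos]
        _ = β := mul_one β
    rw [hβdef] at hper
    have hfd := floor_diff_bound (X n) (X (n+m)) (c * (m:ℝ)) hs0 hper
    have hc1 : ((f (n+m) : ℕ) : ℝ) = ((⌊X (n+m)⌋ : ℤ) : ℝ) := by
      rw [hfeq]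
      have h := Int.toNat_of_nonneg (Int.floor_nonneg.2 hX2)
      exact_mod_cast congrArg (Int.cast : ℤ → ℝ) h
    have hc2 : ((f n : ℕ) : ℝ) = ((⌊X n⌋ : ℤ) : ℝ) := by
      rw [hfeq]
      have h := Int.toNat_of_nonneg (Int.floor_nonneg.2 hX1)
      exact_mod_cast congrArg (Int.cast : ℤ → ℝ) h
    rw [hc1, hc2]
    exact hfd
end

section
/- Suppose the generating sets of G and G' have size at most M, so that v_{k+1} ≤ M·v_k and v'_{k+1} ≤ M·v'_k for all k. If x is the first index after x_0 with v'_{⌊g(x)⌋} / v_x ≤ 1, where g increases by at most c + 1 per unit step and v'_{⌊g(x_0)⌋}/v_{x_0} ≥ 1, then at that first crossing time the ratio v'_{⌊g(x)⌋} / v_x lies in the interval [1/M, M^{2c}]. -/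
open Filter Real

/-!
Just before the crossing time `x = y + 1` the ratio was still at least `1`, so
`v (y + 1) ≤ M v y ≤ M v'_{⌊g y⌋} ≤ M v'_{⌊g (y + 1)⌋}`, using that `v` grows by a factor at most
`M` per step while `v' ∘ ⌊g⌋` is nondecreasing. The upper bound is immediate since `1 ≤ M ^ (2c)`.
-/

theorem one_div_le_div_of_one_le_div {a a' b b' M : ℝ} (hb : 0 < b) (hb' : 0 < b')
    (hb'b : b' ≤ M * b) (ha : a ≤ a') (h : 1 ≤ a / b) : 1 / M ≤ a' / b' := by
  have hba : b ≤ a := (one_le_div hb).mp h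
  have hM : 0 < M := pos_of_mul_pos_left (hb'.trans_le hb'b) hb.le
  rw [div_le_div_iff₀ hM hb', one_mul]
  calc b' ≤ M * b := hb'b
    _ ≤ M * a' := by gcongr; exact hba.trans ha
    _ = a' * M := mul_comm _ _

theorem first_crossing_ratio_bound_general (v v' : ℕ → ℕ)
    (hv : ∀ k, 0 < v k) (hmono' : Monotone v')
    (M : ℝ) (hM : 1 ≤ M)
    (hMv : ∀ k : ℕ, (v (k + 1) : ℝ) ≤ M * (v k : ℝ))
    (c : ℝ) (hc : 0 < c)
    (g : ℕ → ℝ)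
    (hstep : ∀ k : ℕ, 0 ≤ g (k + 1) - g k ∧ g (k + 1) - g k ≤ c + 1)
    (x₀ x : ℕ) (hxx : x₀ < x)
    (hcross : (v' (⌊g x⌋.toNat) : ℝ) / (v x : ℝ) ≤ 1)
    (hfirst : ∀ k : ℕ, x₀ ≤ k → k < x → 1 < (v' (⌊g k⌋.toNat) : ℝ) / (v k : ℝ)) :
    1 / M ≤ (v' (⌊g x⌋.toNat) : ℝ) / (v x : ℝ) ∧
      (v' (⌊g x⌋.toNat) : ℝ) / (v x : ℝ) ≤ M ^ (2 * c : ℝ) := by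
  obtain ⟨y, rfl⟩ : ∃ y, x = y + 1 := ⟨x - 1, by omega⟩
  have hg : g y ≤ g (y + 1) := sub_nonneg.mp (hstep y).1
  have hv'g : (v' ⌊g y⌋.toNat : ℝ) ≤ v' ⌊g (y + 1)⌋.toNat := by
    exact_mod_cast hmono' (Int.toNat_le_toNat (Int.floor_le_floor hg))
  refine ⟨?_, hcross.trans (one_le_rpow hM (by positivity))⟩
  exact one_div_le_div_of_one_le_div (by exact_mod_cast hv y) (by exact_mod_cast hv (y + 1))
    (hMv y) hv'g (hfirst y (by omega) (by omega)).le

/-- at the first time after `x₀` where the ratio `v'_{⌊g(x)⌋} / v_x` drops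
to `≤ 1`, the ratio lies in `[1/M, M^{2c}]`. -/
theorem first_crossing_ratio_bound (v v' : ℕ → ℕ)
    (hv : ∀ k, 0 < v k) (hv' : ∀ k, 0 < v' k) (hmono' : Monotone v')
    (M : ℝ) (hM : 1 ≤ M)
    (hMv : ∀ k : ℕ, (v (k + 1) : ℝ) ≤ M * (v k : ℝ))
    (hMv' : ∀ k : ℕ, (v' (k + 1) : ℝ) ≤ M * (v' k : ℝ))
    (c : ℝ) (hc : 0 < c)
    (g : ℕ → ℝ) (hg0 : ∀ k, 0 ≤ g k)
    (hstep : ∀ k : ℕ, 0 ≤ g (k + 1) - g k ∧ g (k + 1) - g k ≤ c + 1)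
    (x₀ x : ℕ) (hxx : x₀ < x)
    (hstart : 1 ≤ (v' (⌊g x₀⌋.toNat) : ℝ) / (v x₀ : ℝ))
    (hcross : (v' (⌊g x⌋.toNat) : ℝ) / (v x : ℝ) ≤ 1)
    (hfirst : ∀ k : ℕ, x₀ ≤ k → k < x → 1 < (v' (⌊g k⌋.toNat) : ℝ) / (v k : ℝ)) :
    1 / M ≤ (v' (⌊g x⌋.toNat) : ℝ) / (v x : ℝ) ∧
      (v' (⌊g x⌋.toNat) : ℝ) / (v x : ℝ) ≤ M ^ (2 * c : ℝ) :=
  first_crossing_ratio_bound_general v v' hv hmono' M hM hMv c hc g hstep x₀ x hxx hcross hfirst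
end

section
/- Assume s_t ≥ ε·v_t for all t (nonamenability of G), and that v'_{r'_k} / v_{r_k} ∈ (1/M, M) for all k, where r'_k = f(r_k). Then the volume v''_n = Σ_{t=0}^{r_n} s_{r_n − t} v'_{f(t)} of the perturbed diamond with parameter n satisfies v''_n ≥ (ε n / M) · v_{r_n} and v''_n ≥ (ε n / M²) · v'_{r'_n}; in particular v''_n / max(v_{r_n}, v'_{r'_n}) → ∞ as n → ∞. -/
open Filter

/-- lower bounds for the volume of the perturbed diamond, and divergence of
its ratio to `max(v_{r_n}, v'_{r'_n})`. -/
theorem perturbedDiamond_volume_lower_bound (v v' s f r : ℕ → ℕ)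
    (ε M : ℝ) (hε : 0 < ε) (hM : 1 ≤ M)
    (hv : ∀ k, 0 < v k) (hv' : ∀ k, 0 < v' k)
    (hsub : ∀ m n : ℕ, v (m + n) ≤ v m * v n)
    (hs : ∀ t : ℕ, ε * (v t : ℝ) ≤ (s t : ℝ))
    (hfmono : Monotone f) (hr : StrictMono r)
    (hratio : ∀ k : ℕ,
      1 / M < (v' (f (r k)) : ℝ) / (v (r k) : ℝ) ∧
      (v' (f (r k)) : ℝ) / (v (r k) : ℝ) < M) :
    let v'' : ℕ → ℝ := fun n => ∑ t ∈ Finset.range (r n + 1), (s (r n - t) : ℝ) * (v' (f t) : ℝ)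
    (∀ n : ℕ, ε * n / M * (v (r n) : ℝ) ≤ v'' n) ∧
    (∀ n : ℕ, ε * n / M ^ 2 * (v' (f (r n)) : ℝ) ≤ v'' n) ∧
    Tendsto (fun n : ℕ => v'' n / max (v (r n) : ℝ) (v' (f (r n)) : ℝ)) atTop atTop := by
  intro v''
  have hM0 : 0 < M := lt_of_lt_of_le one_pos hM
  -- main bound
  have h1 : ∀ n : ℕ, ε * n / M * (v (r n) : ℝ) ≤ v'' n := by
    intro n
    have hsum : ∑ k ∈ Finset.range n, ε * (v (r n) : ℝ) / M ≤ v'' n := by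
      have hsub1 : (Finset.range n).image r ⊆ Finset.range (r n + 1) := by
        intro x hx
        simp only [Finset.mem_image, Finset.mem_range] at hx ⊢
        obtain ⟨k, hk, rfl⟩ := hx
        exact Nat.lt_succ_of_le (hr.monotone hk.le)
      have himg : ∑ t ∈ (Finset.range n).image r, (s (r n - t) : ℝ) * (v' (f t) : ℝ)
          = ∑ k ∈ Finset.range n, (s (r n - r k) : ℝ) * (v' (f (r k)) : ℝ) := by
        rw [Finset.sum_image (fun a _ b _ h => hr.injective h)]
      have hstep : ∑ t ∈ (Finset.range n).image r, (s (r n - t) : ℝ) * (v' (f t) : ℝ)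
          ≤ v'' n := by
        apply Finset.sum_le_sum_of_subset_of_nonneg hsub1
        intro i _ _
        positivity
      refine le_trans ?_ (le_trans (le_of_eq himg.symm) hstep)
      apply Finset.sum_le_sum
      intro k hk
      simp only [Finset.mem_range] at hk
      have hkr : r k ≤ r n := (hr hk).le
      have hsplit : v (r n) ≤ v (r n - r k) * v (r k) := by
        have := hsub (r n - r k) (r k)
        rwa [Nat.sub_add_cancel hkr] at this
      have hsplit' : (v (r n) : ℝ) ≤ (v (r n - r k) : ℝ) * (v (r k) : ℝ) := by
        exact_mod_cast hsplit
      have hsa : ε * (v (r n - r k) : ℝ) ≤ (s (r n - r k) : ℝ) := hs _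
      have hvb : (0 : ℝ) < (v (r k) : ℝ) := by exact_mod_cast hv (r k)
      have hva : (0 : ℝ) < (v (r n - r k) : ℝ) := by exact_mod_cast hv _
      have hvc : (0 : ℝ) < (v' (f (r k)) : ℝ) := by exact_mod_cast hv' _
      have hbc : (v (r k) : ℝ) ≤ (v' (f (r k)) : ℝ) * M := by
        have h := (hratio k).1
        rw [div_lt_div_iff₀ hM0 hvb] at h
        linarith
      rw [div_le_iff₀ hM0]
      have hs0 : (0 : ℝ) ≤ (s (r n - r k) : ℝ) := Nat.cast_nonneg _
      nlinarith [mul_le_mul_of_nonneg_left hsplit' hε.le,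
        mul_le_mul_of_nonneg_left hbc (by positivity : (0:ℝ) ≤ ε * (v (r n - r k) : ℝ)),
        mul_le_mul_of_nonneg_right hsa (by positivity : (0:ℝ) ≤ (v' (f (r k)) : ℝ) * M)]
    calc ε * n / M * (v (r n) : ℝ) = ∑ k ∈ Finset.range n, ε * (v (r n) : ℝ) / M := by
          rw [Finset.sum_const, Finset.card_range]; ring
      _ ≤ v'' n := hsum
  have h2 : ∀ n : ℕ, ε * n / M ^ 2 * (v' (f (r n)) : ℝ) ≤ v'' n := by
    intro n
    have hvb : (0 : ℝ) < (v (r n) : ℝ) := by exact_mod_cast hv _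
    have hr2 : (v' (f (r n)) : ℝ) ≤ M * (v (r n) : ℝ) := by
      have h := (hratio n).2
      rw [div_lt_iff₀ hvb] at h
      exact h.le
    refine le_trans ?_ (h1 n)
    have hn0 : (0 : ℝ) ≤ ε * n / M ^ 2 := by positivity
    calc ε * n / M ^ 2 * (v' (f (r n)) : ℝ) ≤ ε * n / M ^ 2 * (M * (v (r n) : ℝ)) :=
          mul_le_mul_of_nonneg_left hr2 hn0
      _ = ε * n / M * (v (r n) : ℝ) := by field_simp
  refine ⟨h1, h2, ?_⟩
  have key : ∀ n : ℕ, ε * n / M ^ 2 ≤ v'' n / max (v (r n) : ℝ) (v' (f (r n)) : ℝ) := by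
    intro n
    have hvb : (0 : ℝ) < (v (r n) : ℝ) := by exact_mod_cast hv _
    have hvc : (0 : ℝ) < (v' (f (r n)) : ℝ) := by exact_mod_cast hv' _
    have hmaxpos : (0 : ℝ) < max (v (r n) : ℝ) (v' (f (r n)) : ℝ) := lt_max_of_lt_left hvb
    rw [le_div_iff₀ hmaxpos]
    have hn0 : (0 : ℝ) ≤ ε * n / M ^ 2 := by positivity
    rw [mul_max_of_nonneg _ _ hn0]
    apply max_le
    · refine le_trans ?_ (h1 n)
      apply mul_le_mul_of_nonneg_right _ hvb.le
      apply div_le_div_of_nonneg_left (by positivity) hM0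
      nlinarith
    · exact h2 n
  have hdiv : Tendsto (fun n : ℕ => ε * n / M ^ 2) atTop atTop := by
    have : Tendsto (fun n : ℕ => (n : ℝ)) atTop atTop := tendsto_natCast_atTop_atTop
    have h := this.const_mul_atTop (by positivity : (0:ℝ) < ε / M ^ 2)
    refine h.congr fun n => by ring
  exact tendsto_atTop_mono key hdiv
end

section
/- Let B''_1 and B''_2 be horoballs of type II in G'' = G × G' with the metric ρ_c: B''_i = {z : d_{θ_i}(z_1) + d_{θ'_i}(z_2)/c ≤ δ_i} for horofunctions θ_i on G and θ'_i on G'. Then B''_1 and B''_2 have the infinite touching property: there exist infinite sequences ξ^{(1)}_j ∈ B''_1 and ξ^{(2)}_j ∈ B''_2 such that sup_j ρ_c(ξ^{(1)}_j, ξ^{(2)}_j) < ∞ and both sequences leave every finite subset of G''. -/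
/-!
Follow a ray `γ'` of `θ'₁` in `G'` at unit speed and, simultaneously, a ray `γ` of `θ₂` in `G`
at speed `1 / c`. Since `d_{θ₁}` is 1-Lipschitz, `d_{θ₁} + d_{θ'₁} / c` does not grow along
`n ↦ (γ ⌊n / c⌋, γ' n)`, and for the same reason `d_{θ₂} + d_{θ'₂} / c` does not grow along
`n ↦ (γ (⌊n / c⌋ + m), γ' n)`, up to an error below `1`. Starting `γ'` late enough puts the first
sequence in `B''₁`, a large offset `m` puts the second in `B''₂`, and the two stay within
`ρ_c`-distance `m`. Both leave every finite set because `γ'` is injective.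
-/

open Filter

namespace SimpleGraph

variable {V : Type*} {G : SimpleGraph V}

lemma exists_walk_length_eq_of_adj_succ {γ : ℕ → V} (hγ : ∀ i, G.Adj (γ i) (γ (i + 1)))
    (i k : ℕ) : ∃ p : G.Walk (γ i) (γ (i + k)), p.length = k := by
  induction k with
  | zero => exact ⟨.nil, rfl⟩
  | succ k ih =>
    obtain ⟨p, hp⟩ := ih
    exact ⟨p.concat (hγ (i + k)), by rw [Walk.length_concat, hp]⟩

lemma dist_le_of_adj_succ {γ : ℕ → V} (hγ : ∀ i, G.Adj (γ i) (γ (i + 1))) (i k : ℕ) :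
    G.dist (γ i) (γ (i + k)) ≤ k := by
  obtain ⟨p, hp⟩ := exists_walk_length_eq_of_adj_succ hγ i k
  exact (dist_le p).trans_eq hp

lemma le_add_of_adj_succ {f : V → ℝ} (hf : ∀ y z, |f y - f z| ≤ (G.dist y z : ℝ))
    {γ : ℕ → V} (hγ : ∀ i, G.Adj (γ i) (γ (i + 1))) (k : ℕ) :
    f (γ k) ≤ f (γ 0) + k := by
  have hdist : (G.dist (γ 0) (γ k) : ℝ) ≤ k := by
    exact_mod_cast (zero_add k ▸ dist_le_of_adj_succ hγ 0 k)
  have := (abs_le.1 (hf (γ k) (γ 0))).2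
  rw [dist_comm] at this
  linarith

end SimpleGraph

lemma Function.injective_of_apply_eq_sub {α : Type*} {γ : ℕ → α} {f : α → ℝ} {a : ℝ}
    (h : ∀ i : ℕ, f (γ i) = a - i) : Function.Injective γ := by
  intro i j hij
  have : a - (i : ℝ) = a - j := by rw [← h i, ← h j, hij]
  exact_mod_cast sub_right_injective this

lemma eventually_notMem_of_injective_snd {α β : Type*} {ξ : ℕ → α × β}
    (hξ : Function.Injective (Prod.snd ∘ ξ)) {F : Set (α × β)} (hF : F.Finite) :
    ∀ᶠ j in atTop, ξ j ∉ F :=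
  Nat.cofinite_eq_atTop ▸ hξ.of_comp.tendsto_cofinite.eventually hF.eventually_cofinite_notMem

section RayProduct

variable {V V' : Type*} {G : SimpleGraph V} {G' : SimpleGraph V'} {f : V → ℝ} {g : V' → ℝ}
  {γ : ℕ → V} {γ' : ℕ → V'}

lemma lipschitz_add_div_ray_le (hf : ∀ y z, |f y - f z| ≤ (G.dist y z : ℝ))
    (hγ : ∀ i, G.Adj (γ i) (γ (i + 1))) (hg : ∀ i : ℕ, g (γ' i) = g (γ' 0) - i) (c : ℝ)
    (a k : ℕ) : f (γ a) + g (γ' k) / c ≤ f (γ 0) + g (γ' 0) / c + a - k / c := by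
  have hfa := SimpleGraph.le_add_of_adj_succ hf hγ a
  rw [hg, sub_div]
  linarith

lemma ray_add_div_lipschitz_le (hf : ∀ i : ℕ, f (γ i) = f (γ 0) - i)
    (hg : ∀ y z, |g y - g z| ≤ (G'.dist y z : ℝ)) (hγ' : ∀ i, G'.Adj (γ' i) (γ' (i + 1)))
    {c : ℝ} (hc : 0 < c) (a k : ℕ) :
    f (γ a) + g (γ' k) / c ≤ f (γ 0) + g (γ' 0) / c - a + k / c := by
  have hgk : g (γ' k) / c ≤ (g (γ' 0) + k) / c := by
    gcongr; exact SimpleGraph.le_add_of_adj_succ hg hγ' k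
  rw [add_div] at hgk
  rw [hf]
  linarith

end RayProduct

theorem typeII_horoballs_infinite_touching_general {V V' : Type*} [Infinite V] [Infinite V']
    (G : SimpleGraph V) (G' : SimpleGraph V')
    (c : ℝ) (hc : 0 < c)
    (dθ₁ dθ₂ : V → ℝ) (dθ'₁ dθ'₂ : V' → ℝ)
    -- the horofunctions are 1-Lipschitz for the graph metrics
    (hlip₁ : ∀ y z : V, |dθ₁ y - dθ₁ z| ≤ (G.dist y z : ℝ))
    (hlip'₂ : ∀ y z : V', |dθ'₂ y - dθ'₂ z| ≤ (G'.dist y z : ℝ))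
    -- the geodesic-ray property of horofunctions
    (hray₂ : ∀ x : V, ∃ γ : ℕ → V, γ 0 = x ∧ (∀ i, G.Adj (γ i) (γ (i + 1))) ∧
      ∀ i : ℕ, dθ₂ (γ i) = dθ₂ x - i)
    (hray'₁ : ∀ x : V', ∃ γ : ℕ → V', γ 0 = x ∧ (∀ i, G'.Adj (γ i) (γ (i + 1))) ∧
      ∀ i : ℕ, dθ'₁ (γ i) = dθ'₁ x - i)
    (δ₁ δ₂ : ℝ) :
    let ρc : V × V' → V × V' → ℝ := fun z w => (G.dist z.1 w.1 : ℝ) + (G'.dist z.2 w.2 : ℝ) / c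
    let B₁ : Set (V × V') := {z | dθ₁ z.1 + dθ'₁ z.2 / c ≤ δ₁}
    let B₂ : Set (V × V') := {z | dθ₂ z.1 + dθ'₂ z.2 / c ≤ δ₂}
    ∃ ξ₁ ξ₂ : ℕ → V × V',
      (∀ j, ξ₁ j ∈ B₁) ∧ (∀ j, ξ₂ j ∈ B₂) ∧
      (∃ K : ℝ, ∀ j, ρc (ξ₁ j) (ξ₂ j) ≤ K) ∧
      (∀ F : Set (V × V'), F.Finite → ∀ᶠ j in atTop, ξ₁ j ∉ F ∧ ξ₂ j ∉ F) := by
  intro ρc B₁ B₂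
  obtain ⟨x⟩ := Infinite.nonempty V
  obtain ⟨x'⟩ := Infinite.nonempty V'
  obtain ⟨γ, rfl, hγ, hγθ₂⟩ := hray₂ x
  obtain ⟨γ', rfl, hγ', hγ'θ'₁⟩ := hray'₁ x'
  obtain ⟨s, hs⟩ := exists_nat_ge ((dθ₁ (γ 0) + dθ'₁ (γ' 0) / c - δ₁) * c)
  replace hs := (le_div_iff₀ hc).2 hs
  obtain ⟨m, hm⟩ := exists_nat_ge (dθ₂ (γ 0) + dθ'₂ (γ' 0) / c + 1 + s / c - δ₂)
  let A : ℕ → ℕ := fun n => ⌊(n : ℝ) / c⌋₊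
  have hA_le (n : ℕ) : (A n : ℝ) ≤ n / c := Nat.floor_le (by positivity)
  have hA_gt (n : ℕ) : n / c < A n + 1 := Nat.lt_floor_add_one _
  have hshift (n : ℕ) : ((n + s : ℕ) : ℝ) / c = n / c + s / c := by push_cast; ring
  have hγ'inj : Function.Injective fun n => γ' (n + s) :=
    (Function.injective_of_apply_eq_sub hγ'θ'₁).comp (add_left_injective s)
  refine ⟨fun n => (γ (A n), γ' (n + s)), fun n => (γ (A n + m), γ' (n + s)),
    fun n => ?_, fun n => ?_, ⟨m, fun n => ?_⟩, fun F hF => ?_⟩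
  · have := lipschitz_add_div_ray_le hlip₁ hγ hγ'θ'₁ c (A n) (n + s)
    change dθ₁ (γ (A n)) + dθ'₁ (γ' (n + s)) / c ≤ δ₁
    linarith [hA_le n, hshift n]
  · have := ray_add_div_lipschitz_le hγθ₂ hlip'₂ hγ' hc (A n + m) (n + s)
    change dθ₂ (γ (A n + m)) + dθ'₂ (γ' (n + s)) / c ≤ δ₂
    rw [Nat.cast_add, hshift] at this
    linarith [hA_gt n]
  · change (G.dist (γ (A n)) (γ (A n + m)) : ℝ) + (G'.dist (γ' (n + s)) (γ' (n + s)) : ℝ) / c ≤ m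
    rw [SimpleGraph.dist_self, Nat.cast_zero, zero_div, add_zero]
    exact_mod_cast SimpleGraph.dist_le_of_adj_succ hγ (A n) m
  · refine (eventually_notMem_of_injective_snd ?_ hF).and
      (eventually_notMem_of_injective_snd ?_ hF) <;> exact hγ'inj

/-- any two type II horoballs in the `ρ_c`-product of two infinite connected
locally finite graphs have the infinite touching property. -/
theorem typeII_horoballs_infinite_touching {V V' : Type*} [Infinite V] [Infinite V']
    (G : SimpleGraph V) (G' : SimpleGraph V')
    (hconn : G.Connected) (hconn' : G'.Connected)
    (hlf : G.LocallyFinite) (hlf' : G'.LocallyFinite)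
    (c : ℝ) (hc : 0 < c)
    (dθ₁ dθ₂ : V → ℝ) (dθ'₁ dθ'₂ : V' → ℝ)
    -- the horofunctions are 1-Lipschitz for the graph metrics
    (hlip₁ : ∀ y z : V, |dθ₁ y - dθ₁ z| ≤ (G.dist y z : ℝ))
    (hlip₂ : ∀ y z : V, |dθ₂ y - dθ₂ z| ≤ (G.dist y z : ℝ))
    (hlip'₁ : ∀ y z : V', |dθ'₁ y - dθ'₁ z| ≤ (G'.dist y z : ℝ))
    (hlip'₂ : ∀ y z : V', |dθ'₂ y - dθ'₂ z| ≤ (G'.dist y z : ℝ))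
    -- the geodesic-ray property of horofunctions
    (hray₁ : ∀ x : V, ∃ γ : ℕ → V, γ 0 = x ∧ (∀ i, G.Adj (γ i) (γ (i + 1))) ∧
      ∀ i : ℕ, dθ₁ (γ i) = dθ₁ x - i)
    (hray₂ : ∀ x : V, ∃ γ : ℕ → V, γ 0 = x ∧ (∀ i, G.Adj (γ i) (γ (i + 1))) ∧
      ∀ i : ℕ, dθ₂ (γ i) = dθ₂ x - i)
    (hray'₁ : ∀ x : V', ∃ γ : ℕ → V', γ 0 = x ∧ (∀ i, G'.Adj (γ i) (γ (i + 1))) ∧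
      ∀ i : ℕ, dθ'₁ (γ i) = dθ'₁ x - i)
    (hray'₂ : ∀ x : V', ∃ γ : ℕ → V', γ 0 = x ∧ (∀ i, G'.Adj (γ i) (γ (i + 1))) ∧
      ∀ i : ℕ, dθ'₂ (γ i) = dθ'₂ x - i)
    (δ₁ δ₂ : ℝ) :
    let ρc : V × V' → V × V' → ℝ := fun z w => (G.dist z.1 w.1 : ℝ) + (G'.dist z.2 w.2 : ℝ) / c
    let B₁ : Set (V × V') := {z | dθ₁ z.1 + dθ'₁ z.2 / c ≤ δ₁}
    let B₂ : Set (V × V') := {z | dθ₂ z.1 + dθ'₂ z.2 / c ≤ δ₂}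
    ∃ ξ₁ ξ₂ : ℕ → V × V',
      (∀ j, ξ₁ j ∈ B₁) ∧ (∀ j, ξ₂ j ∈ B₂) ∧
      (∃ K : ℝ, ∀ j, ρc (ξ₁ j) (ξ₂ j) ≤ K) ∧
      (∀ F : Set (V × V'), F.Finite → ∀ᶠ j in atTop, ξ₁ j ∉ F ∧ ξ₂ j ∉ F) :=
  typeII_horoballs_infinite_touching_general G G' c hc dθ₁ dθ₂ dθ'₁ dθ'₂ hlip₁ hlip'₂ hray₂ hray'₁
    δ₁ δ₂
end
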